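/- Let φ ∈ ℂᵐ, ψ ∈ (ℂⁿ)*, α > 0, and Φ(z) = φ · (πα)^{-n/2} e^{⟨z,ψ⟩-⟨ψ,z⟩} e^{-⟨z,z⟩/(2α)}. Then (ρ_Φ)_{ijkl} = conj(φ_i) φ_k (conj(ψ_j) ψ_l + δ_{jl}/(4α)); consequently ρ_Φ → conj(φ⊗ψ) ⊙ (φ⊗ψ) as α → ∞, so every product hermitian 2-form is a limit of integrally representable forms. -/

import Mathlib

/-!
The phase `e^{⟨z,ψ⟩-⟨ψ,z⟩}` has modulus one, so `|Φ|²` is the product over the coordinates of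
the density `(πα)⁻¹ e^{-|w|²/α}` of a centred complex Gaussian of variance `α`. Hence `ρ_Φ` is
`conj φ_i φ_k` times the covariance `E[conj(ψ_j - z_j/(2α)) (ψ_l - z_l/(2α))]`, which
factorises over the coordinates: the first moments vanish by the symmetry `w ↦ -w`, and
`E|w|² = α` gives the correction `δ_{jl} α/(2α)² = δ_{jl}/(4α)`, which tends to `0` as `α → ∞`.
-/

open MeasureTheory Complex Finset Real
open scoped ComplexConjugate

/-- The hermitian pairing `⟨z,w⟩ = Σ_j conj(z_j) w_j` on `ℂⁿ`. -/
noncomputable def hermInner {n : ℕ} (z w : Fin n → ℂ) : ℂ := ∑ j, conj (z j) * w j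

/-- The Gaussian wave packet
`f_w(z) = e^{⟨z,w⟩-⟨w,z⟩} (πα)^{-n/2} e^{-⟨z,z⟩/(2α)}`. -/
noncomputable def gaussPacket {n : ℕ} (α : ℝ) (w : Fin n → ℂ) (z : Fin n → ℂ) : ℂ :=
  Complex.exp (hermInner z w - hermInner w z) *
    (((π * α) ^ (-(n : ℝ) / 2) : ℝ) : ℂ) * Complex.exp (-(hermInner z z) / (2 * α))

noncomputable def complexGaussianPDF (α : ℝ) (w : ℂ) : ℝ := (π * α)⁻¹ * rexp (-‖w‖ ^ 2 / α)

section
variable {α : ℝ}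

lemma integral_norm_rpow_mul_complexGaussianPDF (hα : 0 < α) {q : ℝ} (hq : -2 < q) :
    ∫ w : ℂ, ‖w‖ ^ q * complexGaussianPDF α w = α ^ (q / 2) * Real.Gamma (q / 2 + 1) := by
  have hpdf (w : ℂ) : ‖w‖ ^ q * complexGaussianPDF α w =
      (π * α)⁻¹ * (‖w‖ ^ q * rexp (-α⁻¹ * ‖w‖ ^ (2 : ℝ))) := by
    rw [complexGaussianPDF, Real.rpow_two]; ring_nf
  simp_rw [hpdf, integral_const_mul,
    Complex.integral_rpow_mul_exp_neg_mul_rpow one_le_two hq (inv_pos.2 hα),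
    show -(q + 2) / 2 = -(q / 2 + 1) by ring, show (q + 2) / 2 = q / 2 + 1 by ring,
    Real.inv_rpow hα.le, Real.rpow_neg hα.le, inv_inv, Real.rpow_add_one hα.ne']
  field_simp

lemma integral_complexGaussianPDF (hα : 0 < α) : ∫ w : ℂ, complexGaussianPDF α w = 1 := by
  simpa using integral_norm_rpow_mul_complexGaussianPDF hα (q := 0) (by norm_num)

lemma integral_norm_sq_mul_complexGaussianPDF (hα : 0 < α) :
    ∫ w : ℂ, ‖w‖ ^ 2 * complexGaussianPDF α w = α := by
  simpa [Real.rpow_two, one_add_one_eq_two] using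
    integral_norm_rpow_mul_complexGaussianPDF hα (q := 2) (by norm_num)

lemma integrable_norm_rpow_mul_complexGaussianPDF (hα : 0 < α) {q : ℝ} (hq : -2 < q) :
    Integrable fun w : ℂ => ‖w‖ ^ q * complexGaussianPDF α w := by
  refine .of_integral_ne_zero ?_
  rw [integral_norm_rpow_mul_complexGaussianPDF hα hq]
  have : 0 < Real.Gamma (q / 2 + 1) := Real.Gamma_pos_of_pos (by linarith)
  positivity

lemma complexGaussianPDF_neg (w : ℂ) : complexGaussianPDF α (-w) = complexGaussianPDF α w := by
  rw [complexGaussianPDF, complexGaussianPDF, norm_neg]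

lemma integral_mul_complexGaussianPDF : ∫ w : ℂ, w * complexGaussianPDF α w = 0 := by
  have h := integral_neg_eq_self (fun w : ℂ => w * complexGaussianPDF α w) volume
  simp only [complexGaussianPDF_neg, neg_mul, integral_neg] at h
  exact CharZero.eq_neg_self_iff.mp h.symm

lemma complexGaussianPDF_nonneg (hα : 0 < α) (w : ℂ) : 0 ≤ complexGaussianPDF α w := by
  unfold complexGaussianPDF; positivity

lemma integrable_mul_complexGaussianPDF (hα : 0 < α) :
    Integrable fun w : ℂ => w * complexGaussianPDF α w := by
  refine (integrable_norm_rpow_mul_complexGaussianPDF hα (q := 1) (by norm_num)).mono'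
    (by unfold complexGaussianPDF; fun_prop) (.of_forall fun w => ?_)
  rw [norm_mul, norm_real, Real.norm_of_nonneg (complexGaussianPDF_nonneg hα w), Real.rpow_one]

lemma integral_conj_affine_mul_affine_mul_complexGaussianPDF (hα : 0 < α) (a s b t : ℂ) :
    ∫ w : ℂ, conj (a + s * w) * (b + t * w) * complexGaussianPDF α w
      = conj a * b + conj s * t * α := by
  have hexpand (w : ℂ) : conj (a + s * w) * (b + t * w) * complexGaussianPDF α w
      = conj a * b * (complexGaussianPDF α w : ℂ) + conj a * t * (w * complexGaussianPDF α w)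
        + conj s * b * conj (w * complexGaussianPDF α w)
        + conj s * t * ((‖w‖ ^ 2 * complexGaussianPDF α w : ℝ) : ℂ) := by
    simp only [map_add, map_mul, conj_ofReal, ofReal_mul, ofReal_pow, ← conj_mul']
    ring
  have h0 : Integrable fun w : ℂ => (complexGaussianPDF α w : ℂ) := by
    have h := (integrable_norm_rpow_mul_complexGaussianPDF hα (q := 0) (by norm_num)).ofReal
      (𝕜 := ℂ)
    simp only [Real.rpow_zero, one_mul] at h
    exact h
  have h1 := integrable_mul_complexGaussianPDF hα
  have h1' : Integrable fun w : ℂ => conj (w * complexGaussianPDF α w) :=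
    h1.mono (by unfold complexGaussianPDF; fun_prop) (.of_forall fun w => (norm_conj _).le)
  have h2 : Integrable fun w : ℂ => ((‖w‖ ^ 2 * complexGaussianPDF α w : ℝ) : ℂ) := by
    have h := (integrable_norm_rpow_mul_complexGaussianPDF hα (q := 2) (by norm_num)).ofReal
      (𝕜 := ℂ)
    simp only [Real.rpow_two] at h
    exact h
  simp_rw [hexpand]
  rw [integral_add ?_ (h2.const_mul _), integral_add ?_ (h1'.const_mul _),
    integral_add (h0.const_mul _) (h1.const_mul _)]
  · simp only [integral_const_mul, integral_conj, integral_complex_ofReal,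
      integral_mul_complexGaussianPDF, integral_complexGaussianPDF hα,
      integral_norm_sq_mul_complexGaussianPDF hα]
    simp
  · exact (h0.const_mul _).add (h1.const_mul _)
  · exact (h0.const_mul _).add (h1.const_mul _) |>.add (h1'.const_mul _)

lemma integral_conj_affine_mul_affine_mul_prod_complexGaussianPDF {n : ℕ} (hα : 0 < α)
    (j l : Fin n) (a s b t : ℂ) :
    ∫ z : Fin n → ℂ, conj (a + s * z j) * (b + t * z l) * ∏ c, (complexGaussianPDF α (z c) : ℂ)
      = conj a * b + if j = l then conj s * t * α else 0 := by
  -- Coordinates other than `j` (resp. `l`) get the trivial affine factor `1 + 0 * w`, which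
  -- turns the integrand into a product of one-variable integrands.
  set A : Fin n → ℂ := fun c => if c = j then a else 1
  set S : Fin n → ℂ := fun c => if c = j then s else 0
  set B : Fin n → ℂ := fun c => if c = l then b else 1
  set T : Fin n → ℂ := fun c => if c = l then t else 0
  have hprod (z : Fin n → ℂ) :
      conj (a + s * z j) * (b + t * z l) * ∏ c, (complexGaussianPDF α (z c) : ℂ)
        = ∏ c, conj (A c + S c * z c) * (B c + T c * z c) * complexGaussianPDF α (z c) := by
    have hA : ∏ c, conj (A c + S c * z c) = conj (a + s * z j) := by
      rw [Fintype.prod_eq_single j fun c hc => by simp [A, S, hc]]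
      simp [A, S]
    have hB : ∏ c, (B c + T c * z c) = b + t * z l := by
      rw [Fintype.prod_eq_single l fun c hc => by simp [B, T, hc]]
      simp [B, T]
    rw [prod_mul_distrib, prod_mul_distrib, hA, hB]
  simp_rw [hprod, volume_pi]
  rw [integral_fintype_prod_eq_prod
    fun c w => conj (A c + S c * w) * (B c + T c * w) * complexGaussianPDF α w]
  simp_rw [integral_conj_affine_mul_affine_mul_complexGaussianPDF hα]
  by_cases hjl : j = l
  · subst hjl
    rw [prod_eq_single j (fun c _ hc => by simp [A, S, B, T, hc]) (by simp)]
    simp [A, S, B, T]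
  · rw [← prod_subset (subset_univ {j, l}) fun c _ hc => ?_, prod_pair hjl]
    · simp [A, S, B, T, hjl, Ne.symm hjl]
    · simp only [mem_insert, mem_singleton, not_or] at hc
      simp [A, S, B, T, hc]

lemma conj_hermInner {n : ℕ} (z w : Fin n → ℂ) : conj (hermInner z w) = hermInner w z := by
  simp only [hermInner, map_sum, map_mul, conj_conj, mul_comm]

lemma hermInner_self {n : ℕ} (z : Fin n → ℂ) : hermInner z z = ((∑ c, ‖z c‖ ^ 2 : ℝ) : ℂ) := by
  simp [hermInner, conj_mul']

lemma norm_gaussPacket {n : ℕ} (hα : 0 ≤ α) (ψ z : Fin n → ℂ) :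
    ‖gaussPacket α ψ z‖ = (π * α) ^ (-(n : ℝ) / 2) * rexp (-(∑ c, ‖z c‖ ^ 2) / (2 * α)) := by
  have hphase : (hermInner z ψ - hermInner ψ z).re = 0 := by
    rw [← conj_hermInner, sub_re, conj_re, sub_self]
  have hwidth : -hermInner z z / (2 * α) = ((-(∑ c, ‖z c‖ ^ 2) / (2 * α) : ℝ) : ℂ) := by
    rw [hermInner_self]; push_cast; ring
  rw [gaussPacket, norm_mul, norm_mul, norm_exp, norm_exp, hphase, Real.exp_zero, one_mul, hwidth,
    ofReal_re, norm_real, Real.norm_of_nonneg (by positivity)]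

lemma conj_gaussPacket_mul_self {n : ℕ} (hα : 0 < α) (ψ z : Fin n → ℂ) :
    conj (gaussPacket α ψ z) * gaussPacket α ψ z = ∏ c, (complexGaussianPDF α (z c) : ℂ) := by
  rw [conj_mul', norm_gaussPacket hα.le, ← ofReal_pow, ← ofReal_prod]
  congr 1
  have hnorm : ((π * α) ^ (-(n : ℝ) / 2)) ^ 2 = (π * α)⁻¹ ^ n := by
    rw [← Real.rpow_natCast, ← Real.rpow_mul (by positivity), inv_pow, ← Real.rpow_natCast,
      ← Real.rpow_neg (by positivity)]
    ring_nf
  have hexp : rexp (-(∑ c, ‖z c‖ ^ 2) / (2 * α)) ^ 2 = ∏ c, rexp (-‖z c‖ ^ 2 / α) := by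
    rw [← Real.exp_nat_mul, ← Real.exp_sum]
    congr 1
    rw [← sum_div, sum_neg_distrib]
    field_simp
    push_cast
    ring
  simp only [complexGaussianPDF, prod_mul_distrib, prod_const, card_univ, Fintype.card_fin,
    mul_pow, hnorm, hexp]

lemma integral_conj_mul_mul_gaussPacket {n : ℕ} (hα : 0 < α) (ψ : Fin n → ℂ) (j l : Fin n)
    (p q : ℂ) :
    ∫ z : Fin n → ℂ,
        conj (p * (ψ j - z j / (2 * α)) * gaussPacket α ψ z) *
          (q * (ψ l - z l / (2 * α)) * gaussPacket α ψ z)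
      = conj p * q * (conj (ψ j) * ψ l + (if j = l then 1 else 0) / (4 * α)) := by
  set s : ℝ := -(2 * α)⁻¹
  have haffine (w : ℂ) (a : ℂ) : a - w / (2 * α) = a + s * w := by
    simp only [s]; push_cast; ring
  have hintegrand (z : Fin n → ℂ) :
      conj (p * (ψ j - z j / (2 * α)) * gaussPacket α ψ z) *
          (q * (ψ l - z l / (2 * α)) * gaussPacket α ψ z)
        = conj p * q * (conj (ψ j + s * z j) * (ψ l + s * z l) *
            ∏ c, (complexGaussianPDF α (z c) : ℂ)) := by
    rw [← conj_gaussPacket_mul_self hα, haffine, haffine, map_mul, map_mul]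
    ring
  have hs : conj (s : ℂ) * s * α = 1 / (4 * α) := by
    simp only [s, conj_ofReal]
    push_cast
    field_simp
    ring
  simp_rw [hintegrand, integral_const_mul,
    integral_conj_affine_mul_affine_mul_prod_complexGaussianPDF hα, apply_ite, hs]
  split_ifs <;> ring

end

lemma tendsto_add_div_mul_atTop (a b c : ℂ) :
    Filter.Tendsto (fun x : ℝ => a + b / (c * x)) Filter.atTop (nhds a) := by
  have hinv : Filter.Tendsto (fun x : ℝ => ((x⁻¹ : ℝ) : ℂ)) Filter.atTop (nhds 0) := by
    rw [← ofReal_zero, Filter.tendsto_ofReal_iff]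
    exact tendsto_inv_atTop_zero
  have h := (hinv.const_mul (b / c)).const_add a
  rw [mul_zero, add_zero] at h
  refine h.congr fun x => ?_
  push_cast
  ring

/-- for `Φ(z) = φ f_ψ(z)` one has
`(ρ_Φ)_{ijkl} = conj(φ_i) φ_k (conj(ψ_j) ψ_l + δ_{jl}/(4α))`
(with `∂̄_{z_j}Φ_i(z) = φ_i (ψ_j - z_j/(2α)) f_ψ(z)`), and consequently
`ρ_Φ → conj(φ⊗ψ) ⊙ (φ⊗ψ)` as `α → ∞`: every product hermitian 2-form is a
limit of integrally representable forms. -/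
theorem product_form_approx (n m : ℕ) (φ : Fin m → ℂ) (ψ : Fin n → ℂ)
    (i k : Fin m) (j l : Fin n) :
    (∀ α : ℝ, 0 < α →
      (∫ z : Fin n → ℂ,
          conj (φ i * (ψ j - z j / (2 * α)) * gaussPacket α ψ z) *
            (φ k * (ψ l - z l / (2 * α)) * gaussPacket α ψ z)) =
        conj (φ i) * φ k * (conj (ψ j) * ψ l + (if j = l then 1 else 0) / (4 * α))) ∧
    Filter.Tendsto
      (fun α : ℝ => ∫ z : Fin n → ℂ,
          conj (φ i * (ψ j - z j / (2 * α)) * gaussPacket α ψ z) *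
            (φ k * (ψ l - z l / (2 * α)) * gaussPacket α ψ z))
      Filter.atTop (nhds (conj (φ i * ψ j) * (φ k * ψ l))) := by
  have hρ (α : ℝ) (hα : 0 < α) := integral_conj_mul_mul_gaussPacket hα ψ j l (φ i) (φ k)
  refine ⟨hρ, ?_⟩
  rw [map_mul, mul_mul_mul_comm]
  exact ((tendsto_add_div_mul_atTop _ _ 4).const_mul _).congr'
    (Filter.eventually_gt_atTop 0 |>.mono fun α hα => (hρ α hα).symm)
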